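/- arXiv:1804.02839 — 4 statements merged into one kernel-verified Lean document; each statement's English description precedes it below -/
import Mathlib

section
/- Let δ > 0, x ∈ ℝ^k, and let E be an m×k random matrix with independent isotropic sub-Gaussian rows whose ψ₂-norms do not exceed K. Then there exists a constant c_K > 0 depending only on K such that μ := (1/m)·‖𝔼[Eᵀ(Ex − Q(Ex))]‖ ≤ (δ/2)·(1 + c_K·√(k/m)). -/
open MeasureTheory ProbabilityTheory Matrix Real

noncomputable section

/-- Uniform scalar quantizer with stepsize `δ`:  `quant δ t = n·δ` for
`t ∈ (nδ - δ/2, nδ + δ/2]`. -/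
def quant (δ t : ℝ) : ℝ := δ * (⌈t / δ - 1 / 2⌉ : ℤ)

/-- Coordinatewise (memoryless scalar) quantizer. -/
def Qv {ι : Type*} (δ : ℝ) (y : ι → ℝ) : ι → ℝ := fun j => quant δ (y j)

/-- Euclidean norm of a finitely indexed real vector. -/
def enorm' {ι : Type*} [Fintype ι] (v : ι → ℝ) : ℝ := Real.sqrt (∑ i, v i ^ 2)

/-- Moore–Penrose pseudoinverse `E† = (EᵀE)⁻¹Eᵀ` of a (full column-rank) matrix. -/
def pinv {m n : Type*} [Fintype m] [Fintype n] [DecidableEq n] (E : Matrix m n ℝ) :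
    Matrix n m ℝ := (E.transpose * E)⁻¹ * E.transpose

/-- Sub-Gaussian (ψ₂) norm : `‖X‖_{ψ₂} = sup_{p ≥ 1} p^{-1/2} (𝔼|X|^p)^{1/p}`. -/
def subgNorm {Ω : Type*} [MeasurableSpace Ω] (μ : Measure Ω) (X : Ω → ℝ) : ℝ :=
  ⨆ p : {p : ℝ // 1 ≤ p}, (p : ℝ) ^ (-(1/2) : ℝ) * (∫ ω, |X ω| ^ (p : ℝ) ∂μ) ^ ((p : ℝ)⁻¹)

lemma abs_sub_quant_le {δ : ℝ} (hδ : 0 < δ) (t : ℝ) : |t - quant δ t| ≤ δ / 2 := by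
  have h1 : (t / δ - 1 / 2 : ℝ) ≤ (⌈t / δ - 1 / 2⌉ : ℤ) := Int.le_ceil _
  have h2 : ((⌈t / δ - 1 / 2⌉ : ℤ) : ℝ) < t / δ - 1 / 2 + 1 := Int.ceil_lt_add_one _
  rw [abs_le, quant]
  have e1 : δ * (t / δ) = t := by field_simp
  have h1' := mul_le_mul_of_nonneg_left h1 hδ.le
  have h2' := mul_lt_mul_of_pos_left h2 hδ
  constructor
  · nlinarith
  · nlinarith

lemma abs_integ {Ω : Type} [MeasurableSpace Ω] (P : Measure Ω) [IsProbabilityMeasure P]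
    (f : Ω → ℝ) (s : ℝ) (hs : 0 < s) (h : ∫ ω, (f ω) ^ 2 ∂P = s) :
    Integrable (fun ω => |f ω|) P ∧ ∫ ω, |f ω| ∂P ≤ Real.sqrt s := by
  set N := Real.sqrt s with hNdef
  have hN : 0 < N := Real.sqrt_pos.2 hs
  have hN2 : N ^ 2 = s := Real.sq_sqrt hs.le
  have hsq : Integrable (fun ω => (f ω) ^ 2) P := by
    by_contra hcon
    rw [integral_undef hcon] at h
    exact absurd h.symm (ne_of_gt hs)
  have hmeas : AEStronglyMeasurable (fun ω => |f ω|) P := by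
    have : (fun ω => |f ω|) = fun ω => Real.sqrt ((f ω) ^ 2) := by
      funext ω; rw [Real.sqrt_sq_eq_abs]
    rw [this]
    exact Real.continuous_sqrt.comp_aestronglyMeasurable hsq.aestronglyMeasurable
  have hg : Integrable (fun ω => (N + (f ω) ^ 2 / N) / 2) P :=
    ((integrable_const N).add (hsq.div_const N)).div_const 2
  have hbound : ∀ ω, ‖|f ω|‖ ≤ (N + (f ω) ^ 2 / N) / 2 := by
    intro ω
    rw [Real.norm_eq_abs, abs_abs]
    have h1 : (0:ℝ) ≤ (|f ω| - N) ^ 2 := sq_nonneg _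
    have h2 : |f ω| ^ 2 = (f ω) ^ 2 := sq_abs _
    have expand : (N + (f ω) ^ 2 / N) * N = N ^ 2 + (f ω) ^ 2 := by
      field_simp
    nlinarith [abs_nonneg (f ω)]
  have hint : Integrable (fun ω => |f ω|) P :=
    Integrable.mono' hg hmeas (Filter.Eventually.of_forall hbound)
  refine ⟨hint, ?_⟩
  have hmono := integral_mono hint hg (fun ω => by
    have := hbound ω; rwa [Real.norm_eq_abs, abs_abs] at this)
  calc ∫ ω, |f ω| ∂P ≤ ∫ ω, (N + (f ω) ^ 2 / N) / 2 ∂P := hmono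
    _ = N := by
        rw [integral_div, integral_add (integrable_const N) (hsq.div_const N),
          integral_div, h, integral_const]
        simp [measure_univ]
        field_simp
        nlinarith

/-- Proposition: `μ ≤ (δ/2)(1 + c_K √(k/m))` for independent isotropic
sub-Gaussian rows. -/
theorem mean_term_upper_bound :
    ∀ K : ℝ, 0 < K → ∃ cK : ℝ, 0 < cK ∧
      ∀ (m k : ℕ) (δ : ℝ) (x : Fin k → ℝ)
        (Ω : Type) [MeasurableSpace Ω] (P : Measure Ω),
        IsProbabilityMeasure P →
        ∀ E : Ω → Matrix (Fin m) (Fin k) ℝ,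
          0 < δ →
          -- the rows of `E` are independent
          iIndepFun (fun j ω => E ω j) P →
          -- the rows of `E` are isotropic
          (∀ (j : Fin m) (z : Fin k → ℝ),
            ∫ ω, (∑ i, E ω j i * z i) ^ 2 ∂P = ∑ i, z i ^ 2) →
          -- the rows of `E` are sub-Gaussian with ψ₂-norm at most `K`
          (∀ (j : Fin m) (z : Fin k → ℝ), ∑ i, z i ^ 2 = 1 →
            subgNorm P (fun ω => ∑ i, E ω j i * z i) ≤ K) →
          (1 / (m : ℝ)) * enorm' (fun i =>
              ∫ ω, ((E ω).transpose *ᵥ (E ω *ᵥ x - Qv δ (E ω *ᵥ x))) i ∂P)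
            ≤ δ / 2 * (1 + cK * Real.sqrt ((k : ℝ) / m)) := by
  intro K hK
  refine ⟨1, one_pos, ?_⟩
  intro m k δ x Ω _ P hP E hδ _hindep hiso _hsubg
  classical
  have hRHS : (0:ℝ) ≤ δ / 2 * (1 + 1 * Real.sqrt ((k : ℝ) / m)) := by positivity
  -- the error vector and the column functions
  set e : Ω → Fin m → ℝ := fun ω j => (E ω *ᵥ x) j - quant δ ((E ω *ᵥ x) j) with he
  set h : Fin k → Ω → ℝ := fun i ω => ∑ j, E ω j i * e ω j with hh
  have hcoord : ∀ i, (fun ω => ((E ω).transpose *ᵥ (E ω *ᵥ x - Qv δ (E ω *ᵥ x))) i)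
      = h i := by
    intro i
    funext ω
    simp [Matrix.mulVec, Matrix.transpose_apply, dotProduct, Qv, hh, he]
  set v : Fin k → ℝ := fun i => ∫ ω, h i ω ∂P with hvdef
  have hgoal_fun : (fun i =>
      ∫ ω, ((E ω).transpose *ᵥ (E ω *ᵥ x - Qv δ (E ω *ᵥ x))) i ∂P) = v := by
    funext i; rw [hvdef]
    exact congrArg (fun f => ∫ ω, f ω ∂P) (hcoord i)
  rw [hgoal_fun]
  by_cases hv : v = 0
  · rw [hv]
    have : enorm' (0 : Fin k → ℝ) = 0 := by simp [enorm']
    rw [this, mul_zero]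
    exact hRHS
  -- now v ≠ 0
  have hs : 0 < ∑ i, v i ^ 2 := by
    rcases Function.ne_iff.1 hv with ⟨i0, hi0⟩
    have : 0 < v i0 ^ 2 := by
      have := abs_pos.mpr hi0
      nlinarith [sq_abs (v i0)]
    exact Finset.sum_pos' (fun i _ => sq_nonneg _) ⟨i0, Finset.mem_univ _, this⟩
  set s : ℝ := ∑ i, v i ^ 2 with hsdef
  set N : ℝ := Real.sqrt s with hNdef
  have hN : 0 < N := Real.sqrt_pos.2 hs
  have hN2 : N ^ 2 = s := Real.sq_sqrt hs.le
  set f : Fin m → Ω → ℝ := fun j ω => ∑ i, E ω j i * v i with hf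
  have hfint : ∀ j, Integrable (fun ω => |f j ω|) P ∧ ∫ ω, |f j ω| ∂P ≤ N :=
    fun j => abs_integ P (f j) s hs (hiso j v)
  -- error is bounded by δ/2
  have he_bound : ∀ ω j, |e ω j| ≤ δ / 2 := fun ω j => abs_sub_quant_le hδ _
  -- the set of integrable coordinates
  set T : Finset (Fin k) := Finset.univ.filter (fun i => Integrable (h i) P) with hT
  have hvT : ∀ i ∉ T, v i = 0 := by
    intro i hi
    have : ¬ Integrable (h i) P := by
      intro hcon; exact hi (Finset.mem_filter.2 ⟨Finset.mem_univ _, hcon⟩)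
    exact integral_undef this
  have hTint : ∀ i ∈ T, Integrable (fun ω => v i * h i ω) P := by
    intro i hi
    exact ((Finset.mem_filter.1 hi).2).const_mul _
  set F : Ω → ℝ := fun ω => ∑ i ∈ T, v i * h i ω with hF
  have hFint : Integrable F P := integrable_finset_sum _ hTint
  -- pointwise rewriting of F
  have hFeq : ∀ ω, F ω = ∑ j, e ω j * f j ω := by
    intro ω
    show ∑ i ∈ T, v i * h i ω = ∑ j, e ω j * f j ω
    have step1 : ∑ i ∈ T, v i * h i ω = ∑ i, v i * h i ω := by
      apply Finset.sum_subset (Finset.subset_univ T)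
      intro i _ hi
      rw [hvT i hi, zero_mul]
    rw [step1]
    calc ∑ i, v i * h i ω = ∑ i, ∑ j, v i * (E ω j i * e ω j) := by
          simp only [hh, Finset.mul_sum]
      _ = ∑ j, ∑ i, v i * (E ω j i * e ω j) := Finset.sum_comm
      _ = ∑ j, e ω j * f j ω := by
          refine Finset.sum_congr rfl (fun j _ => ?_)
          simp only [hf, Finset.mul_sum]
          exact Finset.sum_congr rfl (fun i _ => by ring)
  -- key identity : s = ∫ F
  have hkey : s = ∫ ω, F ω ∂P := by
    have : ∀ i ∈ T, ∫ ω, v i * h i ω ∂P = v i * v i := by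
      intro i hi
      rw [integral_const_mul]
    rw [hsdef]
    have e1 : ∑ i, v i ^ 2 = ∑ i ∈ T, v i * v i := by
      rw [← Finset.sum_subset (Finset.subset_univ T)
        (fun i _ hi => by rw [hvT i hi]; ring)]
      exact Finset.sum_congr rfl (fun i _ => sq (v i) ▸ by ring)
    rw [e1, integral_finset_sum T hTint]
    exact Finset.sum_congr rfl (fun i hi => (this i hi).symm)
  -- the dominating function
  set G : Ω → ℝ := fun ω => ∑ j, δ / 2 * |f j ω| with hG
  have hGint : Integrable G P := integrable_finset_sum _ (fun j _ => ((hfint j).1).const_mul _)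
  have hFG : ∀ ω, F ω ≤ G ω := by
    intro ω
    rw [hFeq ω]
    apply Finset.sum_le_sum
    intro j _
    calc e ω j * f j ω ≤ |e ω j * f j ω| := le_abs_self _
      _ = |e ω j| * |f j ω| := abs_mul _ _
      _ ≤ δ / 2 * |f j ω| := mul_le_mul_of_nonneg_right (he_bound ω j) (abs_nonneg _)
  have hIG : ∫ ω, G ω ∂P ≤ (m : ℝ) * (δ / 2 * N) := by
    rw [hG, integral_finset_sum _ (fun j _ => ((hfint j).1).const_mul _)]
    calc ∑ j : Fin m, ∫ ω, δ / 2 * |f j ω| ∂P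
        = ∑ j : Fin m, δ / 2 * ∫ ω, |f j ω| ∂P := by
          exact Finset.sum_congr rfl (fun j _ => integral_const_mul _ _)
      _ ≤ ∑ j : Fin m, δ / 2 * N := by
          refine Finset.sum_le_sum (fun j _ => ?_)
          exact mul_le_mul_of_nonneg_left (hfint j).2 (by positivity)
      _ = (m : ℝ) * (δ / 2 * N) := by simp [Finset.sum_const, mul_comm]
  have hchain : s ≤ (m : ℝ) * (δ / 2 * N) := by
    rw [hkey]
    exact le_trans (integral_mono hFint hGint hFG) hIG
  -- conclude
  have hNle : N ≤ (m : ℝ) * (δ / 2) := by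
    have : N * N ≤ (m : ℝ) * (δ / 2) * N := by
      calc N * N = s := by nlinarith
        _ ≤ (m : ℝ) * (δ / 2 * N) := hchain
        _ = (m : ℝ) * (δ / 2) * N := by ring
    exact le_of_mul_le_mul_right this hN
  have hm : 0 < (m : ℝ) := by
    by_contra hm
    push_neg at hm
    have : (m : ℝ) = 0 := le_antisymm hm (Nat.cast_nonneg m)
    rw [this] at hNle
    nlinarith
  have hLHS : 1 / (m : ℝ) * enorm' v ≤ δ / 2 := by
    have : enorm' v = N := rfl
    rw [this, div_mul_eq_mul_div, one_mul, div_le_iff₀ hm]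
    calc N ≤ (m : ℝ) * (δ / 2) := hNle
      _ = δ / 2 * m := by ring
  calc 1 / (m : ℝ) * enorm' v ≤ δ / 2 := hLHS
    _ ≤ δ / 2 * (1 + 1 * Real.sqrt ((k : ℝ) / m)) := by
        nlinarith [Real.sqrt_nonneg ((k : ℝ) / m)]

end
end

section
/- Let δ > 0, let E ∈ {−1, +1}^{m×k} be a matrix all of whose entries are ±1, and let x ∈ ℝ^k satisfy |x_i − q_δ(x_i)| < δ/(2k) for all i = 1, …, k. Then Q(Ex) = E·Q(x), where Q(x) denotes the vector obtained by applying q_δ to each entry of x. -/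
open MeasureTheory ProbabilityTheory Matrix Real

noncomputable section

lemma quant_eq_of_close (δ : ℝ) (hδ : 0 < δ) (n : ℤ) (t : ℝ)
    (h : |t - δ * n| < δ / 2) : quant δ t = δ * n := by
  unfold quant
  congr 1
  rw [abs_sub_lt_iff] at h
  have h1 : t / δ - 1 / 2 ≤ n := by
    have : t / δ ≤ n + 1 / 2 := by rw [div_le_iff₀ hδ]; nlinarith [h.1]
    linarith
  have h2 : (n : ℝ) - 1 < t / δ - 1 / 2 := by
    have : (n : ℝ) - 1 / 2 < t / δ := by rw [lt_div_iff₀ hδ]; nlinarith [h.2]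
    linarith
  have hc : ⌈t / δ - 1 / 2⌉ = n := Int.ceil_eq_iff.mpr ⟨by exact_mod_cast h2, h1⟩
  exact_mod_cast hc

/-- For ±1 matrices and signals with `|x_i − q_δ(x_i)| < δ/(2k)`,
quantization commutes: `Q(Ex) = E·Q(x)`. -/
theorem bernoulli_quantization_commutes {m k : ℕ} (δ : ℝ) (hδ : 0 < δ)
    (E : Matrix (Fin m) (Fin k) ℝ)
    (hE : ∀ (j : Fin m) (i : Fin k), E j i = 1 ∨ E j i = -1)
    (x : Fin k → ℝ)
    (hx : ∀ i : Fin k, |x i - quant δ (x i)| < δ / (2 * k)) :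
    Qv δ (E *ᵥ x) = E *ᵥ (fun i => quant δ (x i)) := by
  funext j
  set N : ℤ := ∑ i, (if E j i = 1 then ⌈x i / δ - 1 / 2⌉ else -⌈x i / δ - 1 / 2⌉) with hN
  have hsum : (E *ᵥ (fun i => quant δ (x i))) j = δ * N := by
    simp only [mulVec, dotProduct, hN]
    push_cast
    rw [Finset.mul_sum]
    refine Finset.sum_congr rfl fun i _ => ?_
    rcases hE j i with h | h <;> simp [h, quant] <;> norm_num <;> ring
  have hdist : |(E *ᵥ x) j - δ * N| < δ / 2 := by
    rw [← hsum]
    simp only [mulVec, dotProduct, ← Finset.sum_sub_distrib, ← mul_sub]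
    calc |∑ i, E j i * (x i - quant δ (x i))|
        ≤ ∑ i, |E j i * (x i - quant δ (x i))| := Finset.abs_sum_le_sum_abs _ _
      _ = ∑ i, |x i - quant δ (x i)| := by
          refine Finset.sum_congr rfl fun i _ => ?_
          rw [abs_mul]
          rcases hE j i with h | h <;> simp [h]
      _ < δ / 2 := by
          rcases Nat.eq_zero_or_pos k with hk | hk
          · subst hk; simpa using half_pos hδ
          · calc ∑ i : Fin k, |x i - quant δ (x i)|
                < ∑ _i : Fin k, δ / (2 * k) :=
                  Finset.sum_lt_sum_of_nonempty (Finset.univ_nonempty_iff.mpr (Fin.pos_iff_nonempty.mp hk))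
                    (fun i _ => hx i)
              _ = δ / 2 := by
                  field_simp
                  rw [Finset.sum_const, Finset.card_univ, Fintype.card_fin, nsmul_eq_mul]
                  have hk' : (k:ℝ) ≠ 0 := Nat.cast_ne_zero.mpr hk.ne'
                  field_simp
  show quant δ ((E *ᵥ x) j) = _
  rw [quant_eq_of_close δ hδ N _ hdist, hsum]

end
end

section
/- Let δ > 0 and E ∈ {−1, +1}^{m×k}. Suppose x¹, x² ∈ ℝ^k both satisfy |x^j_i − q_δ(x^j_i)| < δ/(2k) for all i (j = 1, 2), and q_δ(x¹_i) = q_δ(x²_i) for all i. Then Q(Ex¹) = Q(Ex²); in particular, for any full column-rank such E, the linear reconstructions coincide: E†Q(Ex¹) = E†Q(Ex²), even though ‖x¹ − x²‖ can be as large as δ·√k/(k) (each coordinate differing by up to δ/k). -/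
open MeasureTheory ProbabilityTheory Matrix Real

noncomputable section

lemma quant_int_add {δ : ℝ} (hδ : 0 < δ) (N : ℤ) (e : ℝ) (he : |e| < δ / 2) :
    quant δ (δ * N + e) = δ * N := by
  unfold quant
  congr 1
  have h1 : -(δ / 2) < e := (abs_lt.mp he).1
  have h2 : e < δ / 2 := (abs_lt.mp he).2
  have hlo : -(1 / 2 : ℝ) < e / δ := by
    rw [neg_lt, ← neg_div, div_lt_iff₀ hδ]; linarith
  have hhi : e / δ < 1 / 2 := by rw [div_lt_iff₀ hδ]; linarith
  have hr : (δ * N + e) / δ - 1 / 2 = (N : ℝ) + (e / δ - 1 / 2) := by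
    field_simp; ring
  norm_cast
  rw [Int.ceil_eq_iff, hr]
  constructor <;> linarith

/-- Two signals with the same quantization and small quantization error
produce identical quantized measurements, hence identical linear reconstructions,
for any ±1 matrix. -/
theorem bernoulli_indistinguishable_signals {m k : ℕ} (δ : ℝ) (hδ : 0 < δ)
    (E : Matrix (Fin m) (Fin k) ℝ)
    (hE : ∀ (j : Fin m) (i : Fin k), E j i = 1 ∨ E j i = -1)
    (x₁ x₂ : Fin k → ℝ)
    (hx₁ : ∀ i : Fin k, |x₁ i - quant δ (x₁ i)| < δ / (2 * k))
    (hx₂ : ∀ i : Fin k, |x₂ i - quant δ (x₂ i)| < δ / (2 * k))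
    (hq : ∀ i : Fin k, quant δ (x₁ i) = quant δ (x₂ i)) :
    Qv δ (E *ᵥ x₁) = Qv δ (E *ᵥ x₂) ∧
    pinv E *ᵥ Qv δ (E *ᵥ x₁) = pinv E *ᵥ Qv δ (E *ᵥ x₂) := by
  have hmain : Qv δ (E *ᵥ x₁) = Qv δ (E *ᵥ x₂) := by
    funext j
    set n : Fin k → ℤ := fun i => ⌈x₁ i / δ - 1 / 2⌉ with hn
    have hqv₁ : ∀ i, quant δ (x₁ i) = δ * n i := fun i => rfl
    have hqv₂ : ∀ i, quant δ (x₂ i) = δ * n i := fun i => (hq i).symm.trans (hqv₁ i)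
    set c : Fin k → ℤ := fun i => if E j i = 1 then 1 else -1 with hc
    have hEc : ∀ i, E j i = (c i : ℝ) := by
      intro i; rcases hE j i with h | h <;> norm_num [hc, h]
    set N : ℤ := ∑ i, c i * n i with hN
    have hsum : ∀ x : Fin k → ℝ, (∀ i, quant δ (x i) = δ * n i) →
        (E *ᵥ x) j = δ * N + ∑ i, E j i * (x i - quant δ (x i)) := by
      intro x hx
      have h1 : ∑ i, E j i * quant δ (x i) = δ * N := by
        calc ∑ i, E j i * quant δ (x i) = ∑ i, ((c i * n i : ℤ) : ℝ) * δ := by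
              refine Finset.sum_congr rfl fun i _ => ?_
              rw [hEc i, hx i]; push_cast; ring
          _ = δ * N := by rw [← Finset.sum_mul, hN]; push_cast; ring
      have : (E *ᵥ x) j = ∑ i, E j i * quant δ (x i) + ∑ i, E j i * (x i - quant δ (x i)) := by
        simp [mulVec, dotProduct, ← Finset.sum_add_distrib]
        exact Finset.sum_congr rfl fun i _ => by ring
      rw [this, h1]
    have herr : ∀ x : Fin k → ℝ, (∀ i, |x i - quant δ (x i)| < δ / (2 * k)) →
        |∑ i, E j i * (x i - quant δ (x i))| < δ / 2 := by
      intro x hx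
      rcases Nat.eq_zero_or_pos k with hk | hk
      · subst hk; simpa using by positivity
      · have hk' : (0 : ℝ) < k := by exact_mod_cast hk
        calc |∑ i, E j i * (x i - quant δ (x i))| ≤ ∑ i, |E j i * (x i - quant δ (x i))| :=
              Finset.abs_sum_le_sum_abs _ _
          _ = ∑ i, |x i - quant δ (x i)| := by
              refine Finset.sum_congr rfl fun i _ => ?_
              rw [abs_mul]
              rcases hE j i with h | h <;> simp [h]
          _ < ∑ _i : Fin k, δ / (2 * k) :=
              Finset.sum_lt_sum_of_nonempty (Finset.univ_nonempty_iff.mpr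
                ⟨⟨0, hk⟩⟩) fun i _ => hx i
          _ = δ / 2 := by
              rw [Finset.sum_const, Finset.card_univ, Fintype.card_fin, nsmul_eq_mul]
              field_simp
    show quant δ ((E *ᵥ x₁) j) = quant δ ((E *ᵥ x₂) j)
    rw [hsum x₁ hqv₁, hsum x₂ hqv₂, quant_int_add hδ N _ (herr x₁ hx₁),
      quant_int_add hδ N _ (herr x₂ hx₂)]
  exact ⟨hmain, by rw [hmain]⟩

end
end

section
/- Let δ > 0, let E ∈ {−1, +1}^{m×1} be a single-column matrix all of whose entries are ±1 (so E has full column rank), and let x ∈ ℝ be such that x − q_δ(x) ≠ δ/2. Then E†Q(Ex) = q_δ(x), and hence the reconstruction error satisfies |x − E†Q(Ex)| = |x − q_δ(x)|; in particular the error does not decrease as m grows. -/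
open MeasureTheory ProbabilityTheory Matrix Real

noncomputable section

lemma ceil_eq_floor_add_one' (y : ℝ) (h : (⌈y⌉ : ℝ) ≠ y) : ⌈y⌉ = ⌊y⌋ + 1 := by
  have h1 : ⌈y⌉ ≤ ⌊y⌋ + 1 := by
    rw [Int.ceil_le]; push_cast; linarith [Int.lt_floor_add_one y]
  have h2 : ⌊y⌋ < ⌈y⌉ := by
    rw [Int.floor_lt]
    exact lt_of_le_of_ne (Int.le_ceil y) (Ne.symm h)
  omega

lemma quant_neg (δ x : ℝ) (hδ : 0 < δ) (hx : x - quant δ x ≠ δ / 2) :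
    quant δ (-x) = - quant δ x := by
  have hd : δ * (x / δ - 1/2) = x - δ/2 := by field_simp
  have hne : (⌈x / δ - 1/2⌉ : ℝ) ≠ x / δ - 1/2 := by
    intro h
    apply hx
    unfold quant
    rw [h, hd]
    ring
  have hceil : ⌈x / δ - 1/2⌉ = ⌊x / δ - 1/2⌋ + 1 := ceil_eq_floor_add_one' _ hne
  unfold quant
  rw [neg_div]
  have : (-(x / δ) - 1/2 : ℝ) = -(x / δ + 1/2) := by ring
  rw [this, Int.ceil_neg]
  have : (x / δ + 1/2 : ℝ) = (x / δ - 1/2) + 1 := by ring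
  rw [this, Int.floor_add_one, hceil]
  push_cast
  ring

/-- Bernoulli frame, one-dimensional signal: the reconstruction is
`q_δ(x)` and the error `|x − q_δ(x)|` does not decrease as `m` grows. -/
theorem bernoulli_one_dimensional {m : ℕ} (hm : 0 < m) (δ : ℝ) (hδ : 0 < δ)
    (E : Matrix (Fin m) (Fin 1) ℝ)
    (hE : ∀ (j : Fin m) (i : Fin 1), E j i = 1 ∨ E j i = -1)
    (x : ℝ) (hx : x - quant δ x ≠ δ / 2) :
    pinv E *ᵥ Qv δ (E *ᵥ (fun _ => x)) = (fun _ => quant δ x) ∧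
    ∀ i : Fin 1,
      |x - (pinv E *ᵥ Qv δ (E *ᵥ (fun _ => x))) i| = |x - quant δ x| := by
  have hQ : Qv δ (E *ᵥ (fun _ => x)) = fun j => E j 0 * quant δ x := by
    funext j
    simp only [Qv, Matrix.mulVec, dotProduct, Fin.sum_univ_one]
    rcases hE j 0 with h | h <;> rw [h]
    · simp
    · simp [quant_neg δ x hδ hx]
  have hEtE : E.transpose * E = fun _ _ => (m : ℝ) := by
    funext i k
    fin_cases i; fin_cases k
    simp only [Matrix.mul_apply, Matrix.transpose_apply]
    have : ∀ j, E j 0 * E j 0 = 1 := fun j => by rcases hE j 0 with h | h <;> rw [h] <;> ring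
    simp [this]
  have key : pinv E *ᵥ Qv δ (E *ᵥ (fun _ => x)) = (fun _ => quant δ x) := by
    funext i
    fin_cases i
    simp only [pinv, Matrix.mulVec, dotProduct, Matrix.mul_apply, Fin.sum_univ_one, hQ]
    have hinv : (E.transpose * E)⁻¹ = fun _ _ => (m : ℝ)⁻¹ := by
      rw [hEtE]
      refine (Matrix.inv_def _).trans ?_
      funext i k
      fin_cases i; fin_cases k
      have hdet : Matrix.det (fun _ _ => (m : ℝ) : Matrix (Fin 1) (Fin 1) ℝ) = (m : ℝ) := by
        exact Matrix.det_fin_one _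
      have hadj : Matrix.adjugate (fun _ _ => (m : ℝ) : Matrix (Fin 1) (Fin 1) ℝ) = 1 := by
        exact Matrix.adjugate_fin_one _
      rw [hdet, hadj]
      simp [Ring.inverse_eq_inv]
    rw [hinv]
    simp only [Matrix.transpose_apply]
    have hc : ∀ j ∈ Finset.univ, (m : ℝ)⁻¹ * E j 0 * (E j 0 * quant δ x)
        = (m : ℝ)⁻¹ * quant δ x := by
      intro j _
      rcases hE j 0 with h | h <;> rw [h] <;> ring
    rw [Finset.sum_congr rfl hc, Finset.sum_const, Finset.card_univ, Fintype.card_fin,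
      nsmul_eq_mul]
    have hm' : (m : ℝ) ≠ 0 := Nat.cast_ne_zero.mpr hm.ne'
    field_simp
  refine ⟨key, fun i => by rw [key]⟩



end
end
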